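/- arXiv:1412.3912 — 3 statements merged into one kernel-verified Lean document; each statement's English description precedes it below -/
import Mathlib

section
/- Let V be a finite vector space over a finite field K, let G ≤ GL(V) be ½-transitive on V∖{0}, let N be a normal subgroup of G, and let U be a nonzero N-invariant subspace of V on which N acts irreducibly (U has no proper nonzero N-invariant subspace). Then for every nonzero v ∈ U the stabilizer G_v is contained in the setwise stabilizer G_U of U, and G_U acts ½-transitively on U∖{0} (all G_U-orbits on nonzero vectors of U have the same size). -/
/-- **Lemma 2.3(iii) (Liebeck–Praeger–Saxl).** Let `G ≤ GL(V)` be `½`-transitive on the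
nonzero vectors of a finite vector space `V`, let `N ⊴ G` and let `U` be a nonzero
`N`-invariant subspace on which `N` acts irreducibly. Then for every nonzero `v ∈ U` the
stabilizer `G_v` is contained in the setwise stabilizer `G_U`, and `G_U` acts
`½`-transitively on `U∖{0}`. -/
theorem halfTransitive_setwise_stabilizer
    (K : Type) [Field K] [Finite K]
    (V : Type) [AddCommGroup V] [Module K V] [Finite V]
    (G N : Subgroup (V ≃ₗ[K] V))
    -- `G` is `½`-transitive on the nonzero vectors,
    (hhalf : ∀ v w : V, v ≠ 0 → w ≠ 0 →
      Nat.card (MulAction.orbit G v) = Nat.card (MulAction.orbit G w))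
    -- `N` is a normal subgroup of `G`,
    (hNG : N ≤ G) (hnorm : ∀ g ∈ G, ∀ x ∈ N, g * x * g⁻¹ ∈ N)
    (U : Submodule K V) (hU : U ≠ ⊥)
    -- `U` is `N`-invariant,
    (hinv : ∀ x ∈ N, ∀ u ∈ U, x u ∈ U)
    -- and `N` acts irreducibly on `U`:
    (hirr : ∀ W : Submodule K V, W ≤ U → (∀ x ∈ N, ∀ u ∈ W, x u ∈ W) → W = ⊥ ∨ W = U) :
    -- `G_v ≤ G_U` for every nonzero `v ∈ U`,
    (∀ v ∈ U, v ≠ 0 → ∀ g ∈ G, g v = v → ∀ u ∈ U, g u ∈ U) ∧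
    -- and `G_U` is `½`-transitive on `U∖{0}`:
    (∀ v ∈ U, ∀ w ∈ U, v ≠ 0 → w ≠ 0 →
      Nat.card {x : V | ∃ g ∈ G, (∀ u ∈ U, g u ∈ U) ∧ x = g v} =
      Nat.card {x : V | ∃ g ∈ G, (∀ u ∈ U, g u ∈ U) ∧ x = g w}) := by
  haveI : Finite (V ≃ₗ[K] V) :=
    Finite.of_injective (fun g => (g : V → V)) (fun a b h => by
      ext x; exact congrFun h x)
  -- key step: if g ∈ G fixes nonzero v ∈ U, then U ≤ g U
  have key : ∀ v ∈ U, v ≠ 0 → ∀ g ∈ G, g v = v →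
      U ≤ Submodule.map (g : V →ₗ[K] V) U := by
    intro v hv hv0 g hg hgv
    set W : Submodule K V := U ⊓ Submodule.map (g : V →ₗ[K] V) U with hW
    have hWU : W ≤ U := inf_le_left
    have hWinv : ∀ x ∈ N, ∀ u ∈ W, x u ∈ W := by
      intro x hx u hu
      obtain ⟨huU, u', hu', hgu'⟩ := hu
      constructor
      · exact hinv x hx u huU
      · refine ⟨(g⁻¹ * x * g) u', hinv _ ?_ u' hu', ?_⟩
        · have := hnorm g⁻¹ (G.inv_mem hg) x hx
          simpa using this
        · show g ((g⁻¹ * x * g) u') = x u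
          rw [← hgu']
          show g (g⁻¹ (x (g u'))) = x (g u')
          exact g.apply_symm_apply _
    rcases hirr W hWU hWinv with h0 | hU'
    · exfalso
      have : v ∈ W := ⟨hv, v, hv, hgv⟩
      rw [h0] at this
      exact hv0 (by simpa using this)
    · exact le_trans (le_of_eq hU'.symm) inf_le_right
  have part1 : ∀ v ∈ U, v ≠ 0 → ∀ g ∈ G, g v = v → ∀ u ∈ U, g u ∈ U := by
    intro v hv hv0 g hg hgv u hu
    have hginv : (g⁻¹ : V ≃ₗ[K] V) v = v := by
      conv_lhs => rw [← hgv]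
      exact g.symm_apply_apply v
    have := key v hv hv0 g⁻¹ (G.inv_mem hg) hginv hu
    obtain ⟨u', hu', h⟩ := this
    have : g u = u' := by
      have : (g⁻¹ : V ≃ₗ[K] V) u' = u := h
      calc g u = g ((g⁻¹ : V ≃ₗ[K] V) u') := by rw [this]
        _ = u' := g.apply_symm_apply u'
    rw [this]; exact hu'
  refine ⟨part1, ?_⟩
  -- define the setwise stabilizer subgroup H
  set H : Subgroup (V ≃ₗ[K] V) :=
    { carrier := {g | g ∈ G ∧ ∀ u ∈ U, g u ∈ U}
      mul_mem' := by
        rintro a b ⟨ha, ha'⟩ ⟨hb, hb'⟩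
        exact ⟨G.mul_mem ha hb, fun u hu => ha' (b u) (hb' u hu)⟩
      one_mem' := ⟨G.one_mem, fun u hu => by simpa using hu⟩
      inv_mem' := by
        rintro a ⟨ha, ha'⟩
        refine ⟨G.inv_mem ha, fun u hu => ?_⟩
        -- a maps U into U injectively, and U is finite, so a '' U = U
        have hzU : a.symm '' (U : Set V) ⊆ U := by
          have h1 : (a : V → V) '' (U : Set V) ⊆ (U : Set V) := by
            rintro _ ⟨u, hu, rfl⟩; exact ha' u hu
          have hinj : Set.InjOn (a : V → V) U := a.injective.injOn
          have : (a : V → V) '' (U : Set V) = U := by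
            haveI : Finite (U : Set V) := Set.toFinite _
            apply Set.eq_of_subset_of_ncard_le h1
            rw [Set.ncard_image_of_injOn hinj]
          intro x hx
          obtain ⟨y, hy, rfl⟩ := hx
          rw [← this] at hy
          obtain ⟨z, hz, rfl⟩ := hy
          simpa using hz
        exact hzU ⟨u, hu, rfl⟩ } with hH
  intro v hv w hw hv0 hw0
  -- the sets in question are the H-orbits
  have horb : ∀ z : V, {x : V | ∃ g ∈ G, (∀ u ∈ U, g u ∈ U) ∧ x = g z}
      = MulAction.orbit H z := by
    intro z
    ext x
    constructor
    · rintro ⟨g, hg, hg', rfl⟩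
      exact ⟨⟨g, hg, hg'⟩, rfl⟩
    · rintro ⟨⟨g, hg, hg'⟩, rfl⟩
      exact ⟨g, hg, hg', rfl⟩
  rw [horb v, horb w]
  -- orbit-stabilizer for H and G
  have os : ∀ (S : Subgroup (V ≃ₗ[K] V)) (z : V),
      Nat.card (MulAction.orbit S z) * Nat.card (MulAction.stabilizer S z)
        = Nat.card S := by
    intro S z
    rw [← Nat.card_prod]
    exact Nat.card_congr (MulAction.orbitProdStabilizerEquivGroup S z)
  -- stabilizers in H equal stabilizers in G for nonzero vectors of U
  have stabeq : ∀ z ∈ U, z ≠ 0 →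
      Nat.card (MulAction.stabilizer H z) = Nat.card (MulAction.stabilizer G z) := by
    intro z hz hz0
    apply Nat.card_congr
    refine ⟨fun x => ⟨⟨x.1.1, x.1.2.1⟩, x.2⟩,
      fun x => ⟨⟨x.1.1, x.1.2, part1 z hz hz0 x.1.1 x.1.2 x.2⟩, x.2⟩, ?_, ?_⟩
    · intro x; rfl
    · intro x; rfl
  have hpos : ∀ (S : Subgroup (V ≃ₗ[K] V)) (z : V),
      0 < Nat.card (MulAction.stabilizer S z) := fun S z => Nat.card_pos
  -- |stab_G v| = |stab_G w| from ½-transitivity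
  have hstabG : Nat.card (MulAction.stabilizer G v) = Nat.card (MulAction.stabilizer G w) := by
    have h1 := os G v
    have h2 := os G w
    rw [hhalf v w hv0 hw0] at h1
    rw [← h2] at h1
    rcases Nat.eq_zero_or_pos (Nat.card (MulAction.orbit G w)) with h | h
    · exfalso
      have : Nonempty (MulAction.orbit G w) := ⟨⟨w, MulAction.mem_orbit_self w⟩⟩
      have : 0 < Nat.card (MulAction.orbit G w) := Nat.card_pos
      omega
    · exact Nat.eq_of_mul_eq_mul_left h h1
  have hs : Nat.card (MulAction.stabilizer H v) = Nat.card (MulAction.stabilizer H w) := by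
    rw [stabeq v hv hv0, stabeq w hw hw0, hstabG]
  have h1 := os H v
  have h2 := os H w
  rw [hs] at h1
  rw [← h2] at h1
  exact Nat.eq_of_mul_eq_mul_right (hpos H w) h1
end

section
/- Let p be a prime and c an integer with 5 ≤ c < p. Let V = {(x_1, …, x_c) ∈ F_p^c : Σ x_i = 0} be the deleted permutation module, let H be A_c or S_c acting on V by permuting coordinates, let Z_0 be a subgroup of the scalar matrices F_p^× acting on V, and let G = Z_0·H ≤ GL(V). Then the G-orbit of v_1 = (1, −1, 0, …, 0) has size c(c−1)|Z_0|/gcd(2, |Z_0|) and the G-orbit of v_2 = (1, 1, −2, 0, …, 0) has size 3|Z_0|·binom(c,3); these sizes are unequal, so G is not ½-transitive on V∖{0}. -/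
/-!
Both `v₁ = e₀ - e₁` and `v₂ = e₀ + e₁ - 2e₂` are fixed by a transposition, so `A_c` and `S_c`
have the same orbits on them, and the `G`-orbits are `{z(e_a - e_b)}` and `{z(e_a + e_b - 2e_d)}`
with `z ∈ Z₀`. In the second family `z`, `{a, b}` and `d` are determined by the vector because
`2, 3 ≠ 0` in `𝔽_p`, giving `|Z₀| · C(c,2) · (c-2) = 3|Z₀| C(c,3)` vectors. In the first,
`z(e_a - e_b) = (-z)(e_b - e_a)` is the only coincidence, and it occurs within the family exactly
when `-1 ∈ Z₀`, i.e. when `|Z₀|` is even. For `c ≥ 5` the second count is the larger.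
-/

open Equiv

variable {R ι : Type*}

def scalarPermOrbit [Monoid R] (Z₀ : Subgroup Rˣ) (H : Subgroup (Perm ι)) (v : ι → R) :
    Set (ι → R) :=
  {x | ∃ z ∈ Z₀, ∃ σ ∈ H, x = fun i => (z : R) * v (σ i)}

section Orbits

variable [Fintype ι] [DecidableEq ι]

theorem exists_mem_alternatingGroup_comp_eq {α : Type*} {v : ι → α} {u w : ι} (huw : u ≠ w)
    (hv : v u = v w) (σ : Perm ι) : ∃ τ ∈ alternatingGroup ι, v ∘ τ = v ∘ σ := by
  rcases Int.units_eq_one_or (Perm.sign σ) with hσ | hσ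
  · exact ⟨σ, hσ, rfl⟩
  · refine ⟨swap u w * σ, by simp [Perm.mem_alternatingGroup, hσ, huw], funext fun i => ?_⟩
    simp only [Function.comp_apply, Perm.mul_apply, swap_apply_def]
    split_ifs <;> simp_all

theorem scalarPermOrbit_eq_top [Monoid R] (Z₀ : Subgroup Rˣ) {H : Subgroup (Perm ι)}
    (hH : H = alternatingGroup ι ∨ H = ⊤) {v : ι → R} {u w : ι} (huw : u ≠ w)
    (hv : v u = v w) : scalarPermOrbit Z₀ H v = scalarPermOrbit Z₀ ⊤ v := by
  rcases hH with rfl | rfl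
  · refine Set.Subset.antisymm (fun x ⟨z, hz, σ, _, hx⟩ => ⟨z, hz, σ, trivial, hx⟩) ?_
    rintro x ⟨z, hz, σ, -, rfl⟩
    obtain ⟨τ, hτ, hτσ⟩ := exists_mem_alternatingGroup_comp_eq huw hv σ
    exact ⟨z, hz, τ, hτ, funext fun i => congrArg (_ * ·) (congrFun hτσ i).symm⟩
  · rfl

end Orbits

section Vectors

variable [CommRing R] [DecidableEq ι]

def pairVec (z : R) (a b : ι) : ι → R :=
  fun i => if i = a then z else if i = b then -z else 0

def tripleVec (z : R) (s : Finset ι) (d : ι) : ι → R :=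
  fun i => if i ∈ s then z else if i = d then -2 * z else 0

theorem pairVec_comp_perm (z : R) (σ : Perm ι) (a b : ι) :
    (fun i => z * pairVec 1 a b (σ i)) = pairVec z (σ.symm a) (σ.symm b) := by
  funext i
  simp only [pairVec, ← Equiv.eq_symm_apply]
  split_ifs <;> ring

theorem tripleVec_comp_perm (z : R) (σ : Perm ι) (s : Finset ι) (d : ι) :
    (fun i => z * tripleVec 1 s d (σ i)) =
      tripleVec z (s.map σ.symm.toEmbedding) (σ.symm d) := by
  funext i
  simp only [tripleVec, Finset.mem_map_equiv, Equiv.symm_symm, ← Equiv.eq_symm_apply]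
  split_ifs <;> ring

theorem pairVec_neg_swap (z : R) {a b : ι} (hab : a ≠ b) : pairVec (-z) b a = pairVec z a b := by
  funext i
  simp only [pairVec]
  split_ifs <;> simp_all

theorem sum_pairVec [Fintype ι] (z : R) {a b : ι} (hab : a ≠ b) : ∑ i, pairVec z a b i = 0 := by
  simp [pairVec, Finset.sum_ite, Finset.filter_eq', hab.symm]

theorem sum_tripleVec [Fintype ι] (z : R) {s : Finset ι} {d : ι} (hs : s.card = 2)
    (hd : d ∉ s) : ∑ i, tripleVec z s d i = 0 := by
  simp [tripleVec, Finset.sum_ite, hs, hd]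

theorem pairVec_eq_pairVec {z z' : R} {a b a' b' : ι} (hab : a ≠ b) (hz : z ≠ 0)
    (h : pairVec z a b = pairVec z' a' b') :
    (z = z' ∧ a = a' ∧ b = b') ∨ (z = -z' ∧ a = b' ∧ b = a') := by
  have ha := congrFun h a
  have hb := congrFun h b
  simp only [pairVec] at ha hb
  split_ifs at ha hb <;> grind

theorem tripleVec_apply_eq_self_iff [IsDomain R] (h3 : (3 : R) ≠ 0) {z : R} (hz : z ≠ 0)
    (s : Finset ι) (d i : ι) : tripleVec z s d i = z ↔ i ∈ s := by
  have := mul_ne_zero h3 hz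
  unfold tripleVec
  split_ifs <;> grind

theorem tripleVec_eq_tripleVec [IsDomain R] (h2 : (2 : R) ≠ 0) (h3 : (3 : R) ≠ 0) {z z' : R}
    {s s' : Finset ι} {d d' : ι} (hz : z ≠ 0) (hd : d ∉ s) (hd' : d' ∉ s')
    (h : tripleVec z s d = tripleVec z' s' d') : z = z' ∧ s = s' ∧ d = d' := by
  -- if `d ≠ d'`, then `d ∈ s'` and `d' ∈ s`, so `z' = -2z` and `z = -2z'`, whence `3z = 0`
  obtain rfl : d = d' := by
    have h4z := mul_ne_zero (mul_ne_zero h2 h2) hz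
    have hd := congrFun h d
    have hd' := congrFun h d'
    simp only [tripleVec] at hd hd'
    split_ifs at hd hd' <;> grind [mul_ne_zero h2 hz, mul_ne_zero h3 hz]
  obtain rfl : z = z' := by simpa [tripleVec, hd, hd', h2] using congrFun h d
  refine ⟨rfl, Finset.ext fun i => ?_, rfl⟩
  rw [← tripleVec_apply_eq_self_iff h3 hz s d, h, tripleVec_apply_eq_self_iff h3 hz]

theorem pairVec_ne_zero {z : R} (hz : z ≠ 0) (a b : ι) : pairVec z a b ≠ 0 :=
  fun h => hz (by simpa [pairVec] using congrFun h a)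

theorem tripleVec_ne_zero {z : R} (hz : z ≠ 0) {s : Finset ι} (hs : s.Nonempty) (d : ι) :
    tripleVec z s d ≠ 0 := by
  obtain ⟨a, ha⟩ := hs
  exact fun h => hz (by simpa [tripleVec, ha] using congrFun h a)

theorem injective_triple_of_ne_of_notMem {a b d : ι} (hab : a ≠ b) (hd : d ∉ ({a, b} : Finset ι)) :
    Function.Injective ![a, b, d] := by
  intro i j
  fin_cases i <;> fin_cases j <;> simp_all [eq_comm]

theorem scalarPermOrbit_top_pairVec (Z₀ : Subgroup Rˣ) {a b : ι} (hab : a ≠ b) :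
    scalarPermOrbit Z₀ ⊤ (pairVec 1 a b) =
      {x | ∃ z ∈ Z₀, ∃ a' b', a' ≠ b' ∧ x = pairVec (z : R) a' b'} := by
  ext x
  constructor
  · rintro ⟨z, hz, σ, -, rfl⟩
    exact ⟨z, hz, σ.symm a, σ.symm b, σ.symm.injective.ne hab, pairVec_comp_perm _ σ a b⟩
  · rintro ⟨z, hz, a', b', hab', rfl⟩
    obtain ⟨σ, hσ⟩ := Perm.exists_extending_pair ![a', b'] ![a, b]
      (injective_pair_iff_ne.2 hab') (injective_pair_iff_ne.2 hab)
    refine ⟨z, hz, σ, trivial, ?_⟩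
    obtain ⟨rfl, rfl⟩ : σ a' = a ∧ σ b' = b := ⟨hσ 0, hσ 1⟩
    simp [pairVec_comp_perm]

theorem scalarPermOrbit_top_tripleVec (Z₀ : Subgroup Rˣ) {s : Finset ι} {d : ι}
    (hs : s.card = 2) (hd : d ∉ s) :
    scalarPermOrbit Z₀ ⊤ (tripleVec 1 s d) =
      {x | ∃ z ∈ Z₀, ∃ s' d', s'.card = 2 ∧ d' ∉ s' ∧ x = tripleVec (z : R) s' d'} := by
  ext x
  constructor
  · rintro ⟨z, hz, σ, -, rfl⟩
    exact ⟨z, hz, _, _, by simpa using hs, by simpa using hd, tripleVec_comp_perm _ σ s d⟩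
  · rintro ⟨z, hz, s', d', hs', hd', rfl⟩
    obtain ⟨a, b, hab, rfl⟩ := Finset.card_eq_two.1 hs
    obtain ⟨a', b', hab', rfl⟩ := Finset.card_eq_two.1 hs'
    obtain ⟨σ, hσ⟩ := Perm.exists_extending_pair ![a', b', d'] ![a, b, d]
      (injective_triple_of_ne_of_notMem hab' hd') (injective_triple_of_ne_of_notMem hab hd)
    refine ⟨z, hz, σ, trivial, ?_⟩
    obtain ⟨rfl, rfl, rfl⟩ : σ a' = a ∧ σ b' = b ∧ σ d' = d := ⟨hσ 0, hσ 1, hσ 2⟩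
    simp [tripleVec_comp_perm]

theorem scalarPermOrbit_pairVec [Fintype ι] (Z₀ : Subgroup Rˣ) {H : Subgroup (Perm ι)}
    (hH : H = alternatingGroup ι ∨ H = ⊤) (hι : 4 ≤ Fintype.card ι) {a b : ι} (hab : a ≠ b) :
    scalarPermOrbit Z₀ H (pairVec 1 a b) =
      {x | ∃ z ∈ Z₀, ∃ a' b', a' ≠ b' ∧ x = pairVec (z : R) a' b'} := by
  have hcompl : 1 < ({a, b}ᶜ : Finset ι).card := by
    rw [Finset.card_compl, Finset.card_pair hab]
    omega
  obtain ⟨u, hu, w, hw, huw⟩ := Finset.one_lt_card.1 hcompl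
  rw [scalarPermOrbit_eq_top Z₀ hH huw (by simp_all [pairVec]), scalarPermOrbit_top_pairVec Z₀ hab]

theorem scalarPermOrbit_tripleVec [Fintype ι] (Z₀ : Subgroup Rˣ) {H : Subgroup (Perm ι)}
    (hH : H = alternatingGroup ι ∨ H = ⊤) {s : Finset ι} {d : ι} (hs : s.card = 2) (hd : d ∉ s) :
    scalarPermOrbit Z₀ H (tripleVec 1 s d) =
      {x | ∃ z ∈ Z₀, ∃ s' d', s'.card = 2 ∧ d' ∉ s' ∧ x = tripleVec (z : R) s' d'} := by
  obtain ⟨a, b, hab, rfl⟩ := Finset.card_eq_two.1 hs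
  rw [scalarPermOrbit_eq_top Z₀ hH hab (by simp [tripleVec]),
    scalarPermOrbit_top_tripleVec Z₀ hs hd]

end Vectors

theorem neg_one_mem_iff_two_dvd_natCard [CommRing R] [IsDomain R] [Finite R]
    (hR : ringChar R ≠ 2) (Z₀ : Subgroup Rˣ) : (-1 : Rˣ) ∈ Z₀ ↔ 2 ∣ Nat.card Z₀ := by
  have hord : orderOf (-1 : Rˣ) = 2 := by
    rw [← orderOf_units]
    simp [hR]
  refine ⟨fun h => hord ▸ Subgroup.orderOf_dvd_natCard Z₀ h, fun h => ?_⟩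
  obtain ⟨g, hg⟩ := exists_prime_orderOf_dvd_card' 2 h
  have hg' : ((g : Rˣ) : R) = -1 :=
    (CharP.orderOf_eq_two_iff (ringChar R) hR).1 (by rwa [orderOf_units, Subgroup.orderOf_coe])
  exact (Units.ext (by simpa using hg') : (g : Rˣ) = -1) ▸ g.2

section Counting

variable [CommRing R] [Fintype ι] [DecidableEq ι] (Z₀ : Subgroup Rˣ)

theorem natCard_pairVecs_of_neg_one_notMem [Nontrivial R] (hZ : -1 ∉ Z₀) :
    Nat.card {x : ι → R | ∃ z ∈ Z₀, ∃ a b, a ≠ b ∧ x = pairVec (z : R) a b} =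
      Nat.card Z₀ * (Fintype.card ι * Fintype.card ι - Fintype.card ι) := by
  let f : Z₀ × {q : ι × ι // q.1 ≠ q.2} → ι → R :=
    fun w => pairVec ((w.1 : Rˣ) : R) w.2.1.1 w.2.1.2
  have hrange : {x : ι → R | ∃ z ∈ Z₀, ∃ a b, a ≠ b ∧ x = pairVec (z : R) a b} =
      Set.range f := by
    ext x
    constructor
    · rintro ⟨z, hz, a, b, hab, rfl⟩
      exact ⟨(⟨z, hz⟩, ⟨(a, b), hab⟩), rfl⟩
    · rintro ⟨⟨z, ⟨⟨a, b⟩, hab⟩⟩, rfl⟩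
      exact ⟨z, z.2, a, b, hab, rfl⟩
  have hf : Function.Injective f := by
    rintro ⟨z, ⟨⟨a, b⟩, hab⟩⟩ ⟨z', ⟨⟨a', b'⟩, hab'⟩⟩ h
    rcases pairVec_eq_pairVec hab z.1.ne_zero h with ⟨hzz, rfl, rfl⟩ | ⟨hzz, rfl, rfl⟩
    · obtain rfl : z = z' := Subtype.ext (Units.ext hzz)
      rfl
    · refine absurd ?_ hZ
      have : (z : Rˣ) = -z' := Units.val_inj.1 (by simpa using hzz)
      simpa [this] using Z₀.mul_mem z.2 (Z₀.inv_mem z'.2)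
  have hpairs : Nat.card {q : ι × ι // q.1 ≠ q.2} =
      Fintype.card ι * Fintype.card ι - Fintype.card ι := by
    rw [Nat.card_eq_fintype_card, Fintype.card_subtype, ← Finset.card_univ,
      ← Finset.offDiag_card]
    congr 1
    ext
    simp
  rw [hrange, Nat.card_range_of_injective hf, Nat.card_prod, hpairs]

theorem natCard_pairVecs_of_neg_one_mem [Nontrivial R] [LinearOrder ι] (hZ : -1 ∈ Z₀) :
    Nat.card {x : ι → R | ∃ z ∈ Z₀, ∃ a b, a ≠ b ∧ x = pairVec (z : R) a b} =
      Nat.card Z₀ * (Fintype.card ι).choose 2 := by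
  let f : Z₀ × {q : ι × ι // q.1 < q.2} → ι → R :=
    fun w => pairVec ((w.1 : Rˣ) : R) w.2.1.1 w.2.1.2
  have hrange : {x : ι → R | ∃ z ∈ Z₀, ∃ a b, a ≠ b ∧ x = pairVec (z : R) a b} =
      Set.range f := by
    ext x
    constructor
    · rintro ⟨z, hz, a, b, hab, rfl⟩
      rcases hab.lt_or_gt with hab | hba
      · exact ⟨(⟨z, hz⟩, ⟨(a, b), hab⟩), rfl⟩
      · refine ⟨(⟨-z, by simpa using Z₀.mul_mem hZ hz⟩, ⟨(b, a), hba⟩), ?_⟩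
        simpa [f] using pairVec_neg_swap (z : R) hab
    · rintro ⟨⟨z, ⟨⟨a, b⟩, hab⟩⟩, rfl⟩
      exact ⟨z, z.2, a, b, hab.ne, rfl⟩
  have hf : Function.Injective f := by
    rintro ⟨z, ⟨⟨a, b⟩, hab⟩⟩ ⟨z', ⟨⟨a', b'⟩, hab'⟩⟩ h
    rcases pairVec_eq_pairVec hab.ne z.1.ne_zero h with ⟨hzz, rfl, rfl⟩ | ⟨-, rfl, rfl⟩
    · obtain rfl : z = z' := Subtype.ext (Units.ext hzz)
      rfl
    · exact absurd hab (lt_asymm hab')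
  have hpairs : Nat.card {q : ι × ι // q.1 < q.2} = (Fintype.card ι).choose 2 := by
    rw [Nat.card_eq_fintype_card, Fintype.card_subtype, Fintype.card_product_filter_lt]
  rw [hrange, Nat.card_range_of_injective hf, Nat.card_prod, hpairs]

theorem natCard_pairVecs [IsDomain R] [Finite R] [LinearOrder ι] (hR : ringChar R ≠ 2) :
    Nat.card {x : ι → R | ∃ z ∈ Z₀, ∃ a b, a ≠ b ∧ x = pairVec (z : R) a b} =
      Fintype.card ι * (Fintype.card ι - 1) * Nat.card Z₀ / Nat.gcd 2 (Nat.card Z₀) := by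
  by_cases hZ : -1 ∈ Z₀
  · rw [natCard_pairVecs_of_neg_one_mem Z₀ hZ,
      Nat.gcd_eq_left ((neg_one_mem_iff_two_dvd_natCard hR Z₀).1 hZ), Nat.choose_two_right,
      mul_comm, Nat.div_mul_right_comm (Nat.even_mul_pred_self _).two_dvd]
  · have hgcd : Nat.gcd 2 (Nat.card Z₀) = 1 :=
      Nat.prime_two.coprime_iff_not_dvd.2 (mt (neg_one_mem_iff_two_dvd_natCard hR Z₀).2 hZ)
    rw [natCard_pairVecs_of_neg_one_notMem Z₀ hZ, hgcd, Nat.div_one, Nat.mul_sub_one, mul_comm]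

theorem natCard_tripleVecs [IsDomain R] (h2 : (2 : R) ≠ 0) (h3 : (3 : R) ≠ 0) :
    Nat.card {x : ι → R | ∃ z ∈ Z₀, ∃ s d, s.card = 2 ∧ d ∉ s ∧ x = tripleVec (z : R) s d} =
      3 * Nat.card Z₀ * (Fintype.card ι).choose 3 := by
  let f : Z₀ × (Σ s : {s : Finset ι // s.card = 2}, {d // d ∉ s.1}) → ι → R :=
    fun w => tripleVec ((w.1 : Rˣ) : R) w.2.1.1 w.2.2.1
  have hrange : {x : ι → R | ∃ z ∈ Z₀, ∃ s d, s.card = 2 ∧ d ∉ s ∧ x = tripleVec (z : R) s d} =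
      Set.range f := by
    ext x
    constructor
    · rintro ⟨z, hz, s, d, hs, hd, rfl⟩
      exact ⟨(⟨z, hz⟩, ⟨⟨s, hs⟩, ⟨d, hd⟩⟩), rfl⟩
    · rintro ⟨⟨z, ⟨⟨s, hs⟩, ⟨d, hd⟩⟩⟩, rfl⟩
      exact ⟨z, z.2, s, d, hs, hd, rfl⟩
  have hf : Function.Injective f := by
    rintro ⟨z, ⟨s, hs⟩, ⟨d, hd⟩⟩ ⟨z', ⟨s', hs'⟩, ⟨d', hd'⟩⟩ h
    obtain ⟨hzz, rfl, rfl⟩ := tripleVec_eq_tripleVec h2 h3 z.1.ne_zero hd hd' h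
    obtain rfl : z = z' := Subtype.ext (Units.ext hzz)
    rfl
  have hcount : Nat.card (Σ s : {s : Finset ι // s.card = 2}, {d // d ∉ s.1}) =
      (Fintype.card ι).choose 2 * (Fintype.card ι - 2) := by
    rw [Nat.card_eq_fintype_card, Fintype.card_sigma,
      Finset.sum_const_nat (m := Fintype.card ι - 2) fun s _ => by
        simp [Fintype.card_subtype_compl, s.2],
      Finset.card_univ, Fintype.card_finset_len]
  rw [hrange, Nat.card_range_of_injective hf, Nat.card_prod, hcount,
    ← Nat.choose_succ_right_eq]
  ring

end Counting

theorem ZMod.natCast_ne_zero_of_lt {n p : ℕ} (hn : n ≠ 0) (hnp : n < p) : (n : ZMod p) ≠ 0 := by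
  rw [Ne, ZMod.natCast_eq_zero_iff]
  exact fun hd => hn (Nat.eq_zero_of_dvd_of_lt hd hnp)

theorem mul_pred_mul_div_gcd_lt {n k : ℕ} (hn : 5 ≤ n) (hk : 0 < k) :
    n * (n - 1) * k / Nat.gcd 2 k < 3 * k * n.choose 3 := by
  have hpair : n * (n - 1) = 2 * n.choose 2 := by rw [Nat.choose_two_right,
    Nat.mul_div_cancel' (Nat.even_mul_pred_self n).two_dvd]
  have htriple : 3 * n.choose 3 = n.choose 2 * (n - 2) := by
    rw [mul_comm, Nat.choose_succ_right_eq]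
  have hpos : 0 < k * n.choose 2 := Nat.mul_pos hk (Nat.choose_pos (by omega))
  calc n * (n - 1) * k / Nat.gcd 2 k ≤ n * (n - 1) * k := Nat.div_le_self _ _
    _ = 2 * (k * n.choose 2) := by rw [hpair]; ring
    _ < (n - 2) * (k * n.choose 2) := Nat.mul_lt_mul_of_pos_right (by omega) hpos
    _ = 3 * k * n.choose 3 := by
      rw [show 3 * k * n.choose 3 = k * (3 * n.choose 3) by ring, htriple]
      ring

/-- **Case (1) in the proof of Lemma 2.5 (Liebeck–Praeger–Saxl).** For the deleted
permutation module `V = {x ∈ 𝔽_p^c : Σ x_i = 0}` of `A_c` or `S_c` (`5 ≤ c < p`), with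
scalars `Z₀ ≤ 𝔽_p^×`, the `G = Z₀·H`-orbit of `v₁ = (1,-1,0,…,0)` has size
`c(c-1)|Z₀|/gcd(2,|Z₀|)` and that of `v₂ = (1,1,-2,0,…,0)` has size `3|Z₀|·C(c,3)`; these
are unequal, so `G` is not `½`-transitive on `V∖{0}`. -/
theorem deleted_permutation_module_not_halfTransitive
    (p c : ℕ) [Fact p.Prime] (hc : 5 ≤ c) (hcp : c < p)
    (H : Subgroup (Equiv.Perm (Fin c)))
    (hH : H = alternatingGroup (Fin c) ∨ H = ⊤)
    (Z₀ : Subgroup (ZMod p)ˣ)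
    (v₁ v₂ : Fin c → ZMod p)
    (hv₁ : v₁ = fun (i : Fin c) => if (i : ℕ) = 0 then 1 else if (i : ℕ) = 1 then -1 else 0)
    (hv₂ : v₂ = fun (i : Fin c) => if (i : ℕ) = 0 then 1 else if (i : ℕ) = 1 then 1 else
      if (i : ℕ) = 2 then -2 else 0)
    -- `Orb v` is the orbit of `v` under `G = Z₀·H` acting by scalars and permutation of
    -- coordinates:
    (Orb : (Fin c → ZMod p) → Set (Fin c → ZMod p))
    (hOrb : ∀ v, Orb v =
      {x | ∃ z ∈ Z₀, ∃ σ ∈ H, x = fun i => (z : ZMod p) * v (σ i)}) :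
    Nat.card (Orb v₁) = c * (c - 1) * Nat.card Z₀ / Nat.gcd 2 (Nat.card Z₀) ∧
    Nat.card (Orb v₂) = 3 * Nat.card Z₀ * c.choose 3 ∧
    Nat.card (Orb v₁) ≠ Nat.card (Orb v₂) ∧
    ¬ (∀ v w : Fin c → ZMod p, (∑ i, v i) = 0 → v ≠ 0 → (∑ i, w i) = 0 → w ≠ 0 →
        Nat.card (Orb v) = Nat.card (Orb w)) := by
  have h2 : (2 : ZMod p) ≠ 0 := by exact_mod_cast ZMod.natCast_ne_zero_of_lt two_ne_zero (by omega)
  have h3 : (3 : ZMod p) ≠ 0 := by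
    exact_mod_cast ZMod.natCast_ne_zero_of_lt three_ne_zero (by omega)
  have hR : ringChar (ZMod p) ≠ 2 := by rw [ZMod.ringChar_zmod_n]; omega
  let i₀ : Fin c := ⟨0, by omega⟩
  let i₁ : Fin c := ⟨1, by omega⟩
  let i₂ : Fin c := ⟨2, by omega⟩
  have h01 : i₀ ≠ i₁ := by simp [Fin.ext_iff, i₀, i₁]
  have hi₂ : i₂ ∉ ({i₀, i₁} : Finset (Fin c)) := by simp [Fin.ext_iff, i₀, i₁, i₂]
  have hs : ({i₀, i₁} : Finset (Fin c)).card = 2 := Finset.card_pair h01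
  have hv₁' : v₁ = pairVec 1 i₀ i₁ := by subst hv₁; funext i; simp [pairVec, Fin.ext_iff, i₀, i₁]
  have hv₂' : v₂ = tripleVec 1 {i₀, i₁} i₂ := by
    subst hv₂; funext i; simp [tripleVec, Fin.ext_iff, i₀, i₁, i₂, ite_or]
  have hcard₁ : Nat.card (Orb v₁) = c * (c - 1) * Nat.card Z₀ / Nat.gcd 2 (Nat.card Z₀) := by
    rw [hOrb, ← scalarPermOrbit, hv₁', scalarPermOrbit_pairVec Z₀ hH (by simp; omega) h01,
      natCard_pairVecs Z₀ hR, Fintype.card_fin]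
  have hcard₂ : Nat.card (Orb v₂) = 3 * Nat.card Z₀ * c.choose 3 := by
    rw [hOrb, ← scalarPermOrbit, hv₂', scalarPermOrbit_tripleVec Z₀ hH hs hi₂,
      natCard_tripleVecs Z₀ h2 h3, Fintype.card_fin]
  have hne : Nat.card (Orb v₁) ≠ Nat.card (Orb v₂) := by
    rw [hcard₁, hcard₂]
    exact (mul_pred_mul_div_gcd_lt hc Nat.card_pos).ne
  refine ⟨hcard₁, hcard₂, hne, fun hall => hne (hall v₁ v₂ ?_ ?_ ?_ ?_)⟩ <;>
    simp only [hv₁', hv₂']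
  exacts [sum_pairVec 1 h01, pairVec_ne_zero one_ne_zero _ _, sum_tripleVec 1 hs hi₂,
    tripleVec_ne_zero one_ne_zero (Finset.insert_nonempty _ _) _]
end

section
/- Let q = r^f be a prime power and let AΓL_1(q) denote the group of all permutations of F_q of the form x ↦ a·σ(x) + b with a ∈ F_q^×, b ∈ F_q, and σ an automorphism of the field F_q. Let X ≤ AΓL_1(q) be a subgroup that is (2+1/2)-transitive on F_q (2-transitive, with all orbits of a 2-point stabilizer on the remaining points of equal size). Then either X is sharply 2-transitive on F_q, or q = 2^p with p prime and X = AΓL_1(2^p). -/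
/-!
A semilinear map fixing `0` and `1` is a field automorphism, so the 2-point stabiliser `X₀₁` is
a group `H` of automorphisms of `K` whose orbits are those of `X₀₁`. An automorphism fixing a
generator of `Kˣ` is trivial, so if `H ≠ 1` that generator has an orbit of size `|H|`; by the
equal-orbit condition every nontrivial element of `H` then fixes only `0` and `1`. Artin's theorem
gives `|K| = 2 ^ |S|` for every nontrivial subgroup `S ≤ H` (hence `|H|` is prime, by Cauchy's
theorem) and for `S = Aut K` (hence `H = Aut K`), and `2`-transitivity turns `X₀₁ = Aut K` into
`X = AΓL₁(K)`.
-/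

open MulAction

instance RingAut.finite {K : Type*} [Field K] [Finite K] : Finite (K ≃+* K) :=
  Finite.of_injective (fun σ : K ≃+* K => (σ : K → K)) DFunLike.coe_injective

section FiniteFieldAction

variable {G K : Type*} [Group G] [Field K] [MulSemiringAction G K] [FaithfulSMul G K]

lemma stabilizer_eq_bot_of_forall_mem_zpowers {ζ : Kˣ}
    (hζ : ∀ u : Kˣ, u ∈ Subgroup.zpowers ζ) : stabilizer G (ζ : K) = ⊥ := by
  refine (Subgroup.eq_bot_iff_forall _).mpr fun g hg =>
    FaithfulSMul.eq_of_smul_eq_smul (α := K) fun v => ?_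
  rw [one_smul]
  rcases eq_or_ne v 0 with rfl | hv
  · exact smul_zero g
  · obtain ⟨u, rfl⟩ := (isUnit_iff_ne_zero.mpr hv)
    obtain ⟨n, rfl⟩ := Subgroup.mem_zpowers_iff.mp (hζ u)
    rw [Units.val_zpow_eq_zpow_val, ← MulSemiringAction.toRingHom_apply, map_zpow₀,
      MulSemiringAction.toRingHom_apply, mem_stabilizer_iff.mp hg]

variable [Finite G]

lemma natCard_eq_natCard_fixedPoints_pow :
    Nat.card K = Nat.card (FixedPoints.subfield G K) ^ Nat.card G := by
  have := Fintype.ofFinite G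
  rw [Module.natCard_eq_pow_finrank (K := FixedPoints.subfield G K), FixedPoints.finrank_eq_card,
    Nat.card_eq_fintype_card (α := G)]

lemma natCard_eq_two_pow_of_fixedPoints
    (hfix : ∀ u : K, (∀ g : G, g • u = u) → u = 0 ∨ u = 1) :
    Nat.card K = 2 ^ Nat.card G := by
  have hF : ((FixedPoints.subfield G K : Subfield K) : Set K) = {0, 1} := by
    ext u
    refine ⟨hfix u, ?_⟩
    rintro (rfl | rfl)
    exacts [fun g => smul_zero g, fun g => smul_one g]
  rw [natCard_eq_natCard_fixedPoints_pow (G := G), ← SetLike.coe_sort_coe, hF,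
    Nat.card_coe_set_eq, Set.ncard_pair zero_ne_one]

lemma natCard_eq_two_pow_of_free [Nontrivial G]
    (hfree : ∀ g : G, g ≠ 1 → ∀ u : K, g • u = u → u = 0 ∨ u = 1) :
    Nat.card K = 2 ^ Nat.card G := by
  obtain ⟨g, hg⟩ := exists_ne (1 : G)
  exact natCard_eq_two_pow_of_fixedPoints fun u hu => hfree g hg u (hu g)

lemma natCard_prime_of_free [Nontrivial G]
    (hfree : ∀ g : G, g ≠ 1 → ∀ u : K, g • u = u → u = 0 ∨ u = 1) :
    (Nat.card G).Prime := by
  let p := (Nat.card G).minFac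
  have hp : p.Prime := Nat.minFac_prime Finite.one_lt_card.ne'
  have := Fact.mk hp
  obtain ⟨g, hg⟩ := exists_prime_orderOf_dvd_card' (G := G) p (Nat.minFac_dvd _)
  have : Nontrivial (Subgroup.zpowers g) := by
    rw [Subgroup.nontrivial_iff_ne_bot, Ne, Subgroup.zpowers_eq_bot, ← orderOf_eq_one_iff, hg]
    exact hp.one_lt.ne'
  have hfree_zpowers :
      ∀ s : Subgroup.zpowers g, s ≠ 1 → ∀ u : K, s • u = u → u = 0 ∨ u = 1 :=
    fun s hs => hfree s (by simpa using hs)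
  have h := (natCard_eq_two_pow_of_free hfree).symm.trans (natCard_eq_two_pow_of_free hfree_zpowers)
  rw [Nat.pow_right_injective le_rfl h, Nat.card_zpowers, hg]
  exact hp

lemma free_of_natCard_orbit_eq [Finite K]
    (horb : ∀ u v : K, u ≠ 0 → u ≠ 1 → v ≠ 0 → v ≠ 1 →
      Nat.card (orbit G u) = Nat.card (orbit G v)) :
    ∀ g : G, g ≠ 1 → ∀ u : K, g • u = u → u = 0 ∨ u = 1 := by
  intro g hg u hgu
  by_contra! hu
  obtain ⟨ζ, hζ⟩ := IsCyclic.exists_generator (α := Kˣ)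
  have hζ1 : (ζ : K) ≠ 1 := by
    obtain ⟨w, rfl⟩ := isUnit_iff_ne_zero.mpr hu.1
    intro h
    obtain ⟨n, rfl⟩ := Subgroup.mem_zpowers_iff.mp (hζ w)
    simp [Units.val_eq_one.mp h] at hu
  have hcard : (stabilizer G u).index = Nat.card G :=
    calc (stabilizer G u).index = Nat.card (orbit G u) := by
          rw [index_stabilizer, Nat.card_coe_set_eq]
      _ = Nat.card (orbit G (ζ : K)) := horb u ζ hu.1 hu.2 ζ.ne_zero hζ1
      _ = (stabilizer G (ζ : K)).index := by rw [index_stabilizer, Nat.card_coe_set_eq]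
      _ = Nat.card G := by rw [stabilizer_eq_bot_of_forall_mem_zpowers hζ, Subgroup.index_bot]
  have hstab : stabilizer G u = ⊥ := by
    rw [← Subgroup.card_eq_one]
    have := (stabilizer G u).card_mul_index
    rw [hcard] at this
    exact (Nat.mul_eq_right Nat.card_pos.ne').mp this
  exact hg ((Subgroup.eq_bot_iff_forall _).mp hstab g hgu)

lemma subgroup_eq_top_of_free [Finite K] {H : Subgroup (K ≃+* K)} [Nontrivial H]
    (hfree : ∀ σ : H, σ ≠ 1 → ∀ u : K, σ • u = u → u = 0 ∨ u = 1) : H = ⊤ := by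
  refine H.eq_top_of_card_eq (Nat.pow_right_injective le_rfl ?_)
  dsimp only
  rw [← natCard_eq_two_pow_of_free hfree]
  obtain ⟨σ, hσ⟩ := exists_ne (1 : H)
  exact natCard_eq_two_pow_of_fixedPoints fun u hu => hfree σ hσ u (hu σ)

end FiniteFieldAction

section SemilinearGroup

variable {K : Type*} [Field K]

lemma apply_eq_ringEquiv_of_map_zero_of_map_one {x : Equiv.Perm K} {a : Kˣ} {b : K}
    {σ : K ≃+* K} (hx : ∀ v, x v = a * σ v + b) (h0 : x 0 = 0) (h1 : x 1 = 1) (v : K) :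
    x v = σ v := by
  have hb : b = 0 := by simpa [h0] using (hx 0).symm
  have ha : (a : K) = 1 := by simpa [h1, hb] using (hx 1).symm
  rw [hx, ha, hb, one_mul, add_zero]

lemma eq_mul_ringEquiv_of_map_zero_of_map_one {x g : Equiv.Perm K} {a c : Kˣ} {b d : K}
    {σ τ : K ≃+* K} (hx : ∀ v, x v = a * σ v + b) (hg : ∀ v, g v = c * τ v + d)
    (h0 : x 0 = g 0) (h1 : x 1 = g 1) : x = g * (σ.trans τ.symm).toEquiv := by
  have hb : b = d := by simpa [hx, hg] using h0
  have ha : (a : K) = c := by simpa [hx, hg, hb] using h1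
  ext v
  simp [hx, hg, ha, hb]

def ringAutSubgroup (X : Subgroup (Equiv.Perm K)) : Subgroup (K ≃+* K) :=
  X.comap (toPermHom (K ≃+* K) K)

lemma mem_ringAutSubgroup {X : Subgroup (Equiv.Perm K)} {σ : K ≃+* K} :
    σ ∈ ringAutSubgroup X ↔ σ.toEquiv ∈ X :=
  Iff.rfl

variable {X : Subgroup (Equiv.Perm K)}

lemma exists_mem_ringAutSubgroup_of_map_zero_of_map_one
    (hX : ∀ x ∈ X, ∃ (a : Kˣ) (b : K) (σ : K ≃+* K), ∀ v : K, x v = a * σ v + b)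
    {x : Equiv.Perm K} (hx : x ∈ X) (h0 : x 0 = 0) (h1 : x 1 = 1) :
    ∃ σ ∈ ringAutSubgroup X, ∀ v, x v = σ v := by
  obtain ⟨a, b, σ, hxσ⟩ := hX x hx
  have hσ := apply_eq_ringEquiv_of_map_zero_of_map_one hxσ h0 h1
  refine ⟨σ, ?_, hσ⟩
  rwa [mem_ringAutSubgroup, show σ.toEquiv = x from Equiv.ext fun v => (hσ v).symm]

lemma setOf_eq_orbit_ringAutSubgroup
    (hX : ∀ x ∈ X, ∃ (a : Kˣ) (b : K) (σ : K ≃+* K), ∀ v : K, x v = a * σ v + b)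
    (u : K) :
    {y : K | ∃ x ∈ X, x 0 = 0 ∧ x 1 = 1 ∧ y = x u} = orbit (ringAutSubgroup X) u := by
  ext y
  constructor
  · rintro ⟨x, hx, h0, h1, rfl⟩
    obtain ⟨σ, hσ, hxσ⟩ := exists_mem_ringAutSubgroup_of_map_zero_of_map_one hX hx h0 h1
    exact ⟨⟨σ, hσ⟩, (hxσ u).symm⟩
  · rintro ⟨σ, rfl⟩
    exact ⟨σ.1.toEquiv, σ.2, map_zero σ.1, map_one σ.1, rfl⟩

lemma eq_one_of_ringAutSubgroup_eq_bot
    (hX : ∀ x ∈ X, ∃ (a : Kˣ) (b : K) (σ : K ≃+* K), ∀ v : K, x v = a * σ v + b)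
    (h2trans : ∀ a b c d : K, a ≠ b → c ≠ d → ∃ x ∈ X, x a = c ∧ x b = d)
    (hH : ringAutSubgroup X = ⊥) {x : Equiv.Perm K} (hx : x ∈ X) {α β : K} (hαβ : α ≠ β)
    (hα : x α = α) (hβ : x β = β) : x = 1 := by
  obtain ⟨g, hg, hg0, hg1⟩ := h2trans 0 1 α β zero_ne_one hαβ
  have hconj_fix : ∀ w, x (g w) = g w → (g⁻¹ * x * g) w = w := fun w hw => by
    rw [Equiv.Perm.mul_apply, Equiv.Perm.mul_apply, hw, Equiv.Perm.inv_def,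
      Equiv.symm_apply_apply]
  obtain ⟨σ, hσ, hconj⟩ := exists_mem_ringAutSubgroup_of_map_zero_of_map_one hX
    (X.mul_mem (X.mul_mem (X.inv_mem hg) hx) hg) (hconj_fix 0 (by rw [hg0, hα]))
    (hconj_fix 1 (by rw [hg1, hβ]))
  rw [hH, Subgroup.mem_bot] at hσ
  subst hσ
  have : g⁻¹ * x * g = 1 := Equiv.ext hconj
  simpa [mul_assoc, inv_mul_eq_one] using this

lemma mem_of_ringAutSubgroup_eq_top
    (hX : ∀ x ∈ X, ∃ (a : Kˣ) (b : K) (σ : K ≃+* K), ∀ v : K, x v = a * σ v + b)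
    (h2trans : ∀ a b c d : K, a ≠ b → c ≠ d → ∃ x ∈ X, x a = c ∧ x b = d)
    (hH : ringAutSubgroup X = ⊤) {x : Equiv.Perm K} {a : Kˣ} {b : K} {σ : K ≃+* K}
    (hx : ∀ v, x v = a * σ v + b) : x ∈ X := by
  obtain ⟨g, hg, hg0, hg1⟩ := h2trans 0 1 (x 0) (x 1) zero_ne_one (x.injective.ne zero_ne_one)
  obtain ⟨c, d, τ, hgτ⟩ := hX g hg
  rw [eq_mul_ringEquiv_of_map_zero_of_map_one hx hgτ hg0.symm hg1.symm]
  exact X.mul_mem hg (mem_ringAutSubgroup.mp (hH ▸ Subgroup.mem_top _))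

end SemilinearGroup

/-- **The `1`-dimensional affine case (Liebeck–Praeger–Saxl, proof of Prop. 4).** Let
`X ≤ AΓL₁(q)` be `(2+1/2)`-transitive on `𝔽_q`. Then either `X` is sharply `2`-transitive,
or `q = 2^p` with `p` prime and `X = AΓL₁(2^p)`. -/
theorem agammal1_twoPlusHalf_transitive
    (K : Type) [Field K] [Fintype K]
    (X : Subgroup (Equiv.Perm K))
    -- `X ≤ AΓL₁(q)`: every element of `X` has the form `v ↦ a·σ(v) + b`,
    (hX : ∀ x ∈ X, ∃ (a : Kˣ) (b : K) (σ : K ≃+* K), ∀ v : K, x v = a * σ v + b)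
    -- `X` is `2`-transitive,
    (h2trans : ∀ a b c d : K, a ≠ b → c ≠ d → ∃ x ∈ X, x a = c ∧ x b = d)
    -- and all orbits of a `2`-point stabilizer on the remaining points have equal size:
    (horb : ∀ α β a b : K, α ≠ β → a ≠ α → a ≠ β → b ≠ α → b ≠ β →
      Nat.card {y : K | ∃ x ∈ X, x α = α ∧ x β = β ∧ y = x a} =
      Nat.card {y : K | ∃ x ∈ X, x α = α ∧ x β = β ∧ y = x b}) :
    -- either `X` is sharply `2`-transitive,
    (∀ x ∈ X, ∀ α β : K, α ≠ β → x α = α → x β = β → x = 1) ∨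
    -- or `q = 2^p` with `p` prime and `X` is all of `AΓL₁(2^p)`:
    (∃ p : ℕ, p.Prime ∧ Nat.card K = 2 ^ p ∧
      ∀ x : Equiv.Perm K, x ∈ X ↔
        ∃ (a : Kˣ) (b : K) (σ : K ≃+* K), ∀ v : K, x v = a * σ v + b) := by
  rcases eq_or_ne (ringAutSubgroup X) ⊥ with hbot | hne
  · exact .inl fun x hx α β hαβ => eq_one_of_ringAutSubgroup_eq_bot hX h2trans hbot hx hαβ
  have := (Subgroup.nontrivial_iff_ne_bot _).mpr hne
  have hfree := free_of_natCard_orbit_eq (G := ringAutSubgroup X) fun u v hu0 hu1 hv0 hv1 => by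
    simpa only [setOf_eq_orbit_ringAutSubgroup hX] using horb 0 1 u v zero_ne_one hu0 hu1 hv0 hv1
  have htop := subgroup_eq_top_of_free hfree
  refine .inr ⟨_, natCard_prime_of_free hfree, natCard_eq_two_pow_of_free hfree, fun x =>
    ⟨hX x, fun ⟨_, _, _, hx⟩ => mem_of_ringAutSubgroup_eq_top hX h2trans htop hx⟩⟩
end
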